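/- arXiv:1508.02495 — 3 statements merged into one kernel-verified Lean document; each statement's English description precedes it below -/
import Mathlib

section
/- Let t : ℕ → ℕ satisfy t(0) = 1, t(1) = 3, t(n+2) = 2·t(n+1) + t(n). Then (1/n)·log₂(t(n)) converges to log₂(1+√2) as n → ∞. -/
/-!
`t` is squeezed between the two solutions `(1 + √2)ⁿ` and `3 (1 + √2)ⁿ` of its recurrence, so
`log t(n) = n log (1 + √2) + O(1)`.
-/

open Filter Topology

theorem le_of_two_step_recurrence {a b : ℝ} (ha : 0 ≤ a) (hb : 0 ≤ b) {u w : ℕ → ℝ}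
    (hu : ∀ n, u (n + 2) ≤ a * u (n + 1) + b * u n)
    (hw : ∀ n, a * w (n + 1) + b * w n ≤ w (n + 2))
    (h0 : u 0 ≤ w 0) (h1 : u 1 ≤ w 1) (n : ℕ) : u n ≤ w n := by
  induction n using Nat.twoStepInduction with
  | zero => exact h0
  | one => exact h1
  | more n ih₀ ih₁ =>
    calc u (n + 2) ≤ a * u (n + 1) + b * u n := hu n
      _ ≤ a * w (n + 1) + b * w n := by gcongr
      _ ≤ w (n + 2) := hw n

theorem tendsto_inv_mul_log_of_le_of_le {α c C : ℝ} {u : ℕ → ℝ} (hα : 0 < α) (hc : 0 < c)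
    (hlow : ∀ n, c * α ^ n ≤ u n) (hup : ∀ n, u n ≤ C * α ^ n) :
    Tendsto (fun n : ℕ => (1 / (n : ℝ)) * Real.log (u n)) atTop (𝓝 (Real.log α)) := by
  have hC : 0 < C := hc.trans_le (by simpa using (hlow 0).trans (hup 0))
  have hpos (n : ℕ) : 0 < u n := (by positivity : 0 < c * α ^ n).trans_le (hlow n)
  have hlog_low (n : ℕ) : Real.log c + n * Real.log α ≤ Real.log (u n) := by
    rw [← Real.log_pow, ← Real.log_mul hc.ne' (by positivity)]
    exact Real.log_le_log (by positivity) (hlow n)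
  have hlog_up (n : ℕ) : Real.log (u n) ≤ Real.log C + n * Real.log α := by
    rw [← Real.log_pow, ← Real.log_mul hC.ne' (by positivity)]
    exact Real.log_le_log (hpos n) (hup n)
  have hlim (K : ℝ) :
      Tendsto (fun n : ℕ => K / n + Real.log α) atTop (𝓝 (Real.log α)) := by
    simpa using (tendsto_const_nhds.div_atTop tendsto_natCast_atTop_atTop).add_const
      (Real.log α)
  refine tendsto_of_tendsto_of_tendsto_of_le_of_le' (hlim (Real.log c)) (hlim (Real.log C))
    ?_ ?_ <;> filter_upwards [eventually_gt_atTop 0] with n hn <;>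
    rw [div_add' _ _ _ (Nat.cast_pos.mpr hn).ne', one_div_mul_eq_div,
      div_le_div_iff_of_pos_right (Nat.cast_pos.mpr hn)] <;>
    linarith [hlog_low n, hlog_up n]

/-- The constrained coding capacity: `(1/n) log₂ t(n) → log₂ (1 + √2)`. -/
theorem stmt_2
    (t : ℕ → ℕ)
    (h0 : t 0 = 1) (h1 : t 1 = 3)
    (hrec : ∀ n, t (n + 2) = 2 * t (n + 1) + t n) :
    Tendsto (fun n : ℕ => (1 / (n : ℝ)) * Real.logb 2 (t n)) atTop
      (nhds (Real.logb 2 (1 + Real.sqrt 2))) := by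
  set α : ℝ := 1 + Real.sqrt 2
  have hα_one : 1 ≤ α := le_add_of_nonneg_right (Real.sqrt_nonneg 2)
  have hα_sq : α ^ 2 = 2 * α + 1 := by
    linear_combination Real.sq_sqrt (show (0 : ℝ) ≤ 2 by norm_num)
  have hα_three : α ≤ 3 := by nlinarith
  have hgeom (c : ℝ) (n : ℕ) : c * α ^ (n + 2) = 2 * (c * α ^ (n + 1)) + 1 * (c * α ^ n) := by
    linear_combination c * α ^ n * hα_sq
  have ht (n : ℕ) : (t (n + 2) : ℝ) = 2 * t (n + 1) + 1 * t n := by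
    rw [hrec]; push_cast; ring
  have hlow (n : ℕ) : 1 * α ^ n ≤ t n :=
    le_of_two_step_recurrence (u := fun n => 1 * α ^ n) (w := fun n => (t n : ℝ)) zero_le_two
      zero_le_one (fun n => (hgeom 1 n).le) (fun n => (ht n).ge) (by simp [h0]) (by simpa [h1]) n
  have hup (n : ℕ) : (t n : ℝ) ≤ 3 * α ^ n :=
    le_of_two_step_recurrence (u := fun n => (t n : ℝ)) (w := fun n => 3 * α ^ n) zero_le_two
      zero_le_one (fun n => (ht n).le) (fun n => (hgeom 3 n).ge) (by simp [h0]) (by simpa [h1]) n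
  simpa only [Real.logb, mul_div_assoc] using
    (tendsto_inv_mul_log_of_le_of_le (by positivity) one_pos hlow hup).div_const (Real.log 2)
end

section
/- Let t_N : ℕ → ℕ count the ISI-free strings of length n over the alphabet {−, M₁, ..., M_N} with channel memory k = 1 (no molecule symbol appears in two consecutive positions). Then t_N(0) = 1, t_N(1) = N+1, and t_N(n+2) = N·t_N(n+1) + t_N(n) for all n. -/
/-
Split an ISI-free string of length `n + 2` by its last two symbols. If the last symbol is a
molecule `m`, dropping it leaves an ISI-free string of length `n + 1` not ending in `m`; if the
last symbol is blank but the one before is `m`, dropping it leaves one that does end in `m`.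
Together these account for every pair `(m, u)` with `u` of length `n + 1` exactly once, and the
remaining strings end in two blanks, which can be dropped freely.
-/

def ISIFree {α : Type*} {n : ℕ} (s : Fin n → Option α) : Prop :=
  ∀ (j : ℕ) (h : j + 1 < n),
    s ⟨j, Nat.lt_of_succ_lt h⟩ = s ⟨j + 1, h⟩ → s ⟨j, Nat.lt_of_succ_lt h⟩ = none

abbrev ISIFreeString (α : Type*) (n : ℕ) := {s : Fin n → Option α // ISIFree s}

namespace ISIFree

variable {α : Type*} {n : ℕ}

theorem of_le_one (s : Fin n → Option α) (hn : n ≤ 1) : ISIFree s :=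
  fun _ h => absurd h (by omega)

theorem iff_forall_fin {s : Fin (n + 1) → Option α} :
    ISIFree s ↔ ∀ i : Fin n, s i.castSucc = s i.succ → s i.castSucc = none :=
  ⟨fun hs i => hs i (by omega), fun hs j _ => hs ⟨j, by omega⟩⟩

theorem snoc_iff {s : Fin (n + 1) → Option α} {x : Option α} :
    ISIFree (Fin.snoc s x : Fin (n + 2) → Option α) ↔
      ISIFree s ∧ (s (Fin.last n) = x → x = none) := by
  rw [iff_forall_fin, iff_forall_fin, Fin.forall_fin_succ']
  simp only [Fin.succ_castSucc, Fin.snoc_castSucc, Fin.succ_last, Fin.snoc_last]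
  exact and_congr_right fun _ => imp_congr_right fun h => h ▸ Iff.rfl

theorem init {s : Fin (n + 1) → Option α} (hs : ISIFree s) : ISIFree (Fin.init s) :=
  fun j _ => hs j (by omega)

theorem snoc_none {s : Fin n → Option α} (hs : ISIFree s) :
    ISIFree (Fin.snoc s none : Fin (n + 1) → Option α) := by
  cases n with
  | zero => exact of_le_one _ le_rfl
  | succ n => exact snoc_iff.2 ⟨hs, fun _ => rfl⟩

end ISIFree

namespace ISIFreeString

variable {α : Type*} {n : ℕ}

def appendSymbol [DecidableEq α] (m : α) (u : ISIFreeString α (n + 1)) :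
    ISIFreeString α (n + 2) :=
  ⟨Fin.snoc u.1 (if u.1 (Fin.last n) = some m then none else some m),
    ISIFree.snoc_iff.2 ⟨u.2, by split_ifs <;> simp_all⟩⟩

def appendBlanks (u : ISIFreeString α n) : ISIFreeString α (n + 2) :=
  ⟨Fin.snoc (Fin.snoc u.1 none) none, u.2.snoc_none.snoc_none⟩

def extendEquiv [DecidableEq α] :
    (α × ISIFreeString α (n + 1)) ⊕ ISIFreeString α n ≃ ISIFreeString α (n + 2) where
  toFun := Sum.elim (fun p => appendSymbol p.1 p.2) appendBlanks
  invFun s :=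
    match (s.1 (Fin.last (n + 1))).or (Fin.init s.1 (Fin.last n)) with
    | some m => .inl (m, ⟨Fin.init s.1, s.2.init⟩)
    | none => .inr ⟨Fin.init (Fin.init s.1), s.2.init.init⟩
  left_inv := by
    rintro (⟨m, u⟩ | u)
    · by_cases h : u.1 (Fin.last n) = some m <;> simp [appendSymbol, h]
    · simp [appendBlanks]
  right_inv := by
    rintro ⟨s, hs⟩
    obtain ⟨u, a, b, rfl⟩ : ∃ u a b, s = Fin.snoc (Fin.snoc u a) b :=
      ⟨_, _, _, by rw [Fin.snoc_init_self, Fin.snoc_init_self]⟩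
    have hab : a = b → b = none := by simpa using (ISIFree.snoc_iff.1 hs).2
    rcases a with _ | a <;> rcases b with _ | b <;> simp_all [appendSymbol, appendBlanks]

theorem card_of_le_one [Finite α] (hn : n ≤ 1) :
    Nat.card (ISIFreeString α n) = (Nat.card α + 1) ^ n := by
  rw [Nat.card_congr (Equiv.subtypeUnivEquiv fun s => ISIFree.of_le_one s hn), Nat.card_fun,
    Finite.card_option, Nat.card_fin]

theorem card_add_two [Finite α] :
    Nat.card (ISIFreeString α (n + 2)) =
      Nat.card α * Nat.card (ISIFreeString α (n + 1)) + Nat.card (ISIFreeString α n) := by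
  classical
  rw [← Nat.card_congr extendEquiv, Nat.card_sum, Nat.card_prod]

end ISIFreeString

/-- Recurrence for the number of ISI-free strings with `N` molecule types
and channel memory `k = 1`. -/
theorem stmt_5
    (N : ℕ) (t : ℕ → ℕ)
    (ht : ∀ n, t n = Nat.card {s : Fin n → Option (Fin N) //
      ∀ (j : ℕ) (h : j + 1 < n),
        s ⟨j, Nat.lt_of_succ_lt h⟩ = s ⟨j + 1, h⟩ →
        s ⟨j, Nat.lt_of_succ_lt h⟩ = none}) :
    t 0 = 1 ∧ t 1 = N + 1 ∧ ∀ n, t (n + 2) = N * t (n + 1) + t n := by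
  have ht' : ∀ n, t n = Nat.card (ISIFreeString (Fin N) n) := ht
  refine ⟨?_, ?_, fun n => ?_⟩
  · rw [ht', ISIFreeString.card_of_le_one zero_le_one, pow_zero]
  · rw [ht', ISIFreeString.card_of_le_one le_rfl, pow_one, Nat.card_fin]
  · rw [ht', ht', ht', ISIFreeString.card_add_two, Nat.card_fin]
end

section
/- Let t_N : ℕ → ℕ satisfy t_N(0) = 1, t_N(1) = N+1, t_N(n+2) = N·t_N(n+1) + t_N(n), where N ≥ 1. Then (t_N(n))^(1/n) converges to (N + √(N²+4))/2 as n → ∞. -/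
/-!
Write `φ = (N + √(N² + 4)) / 2`, the positive root of `x² = N x + 1`. Both `n ↦ φⁿ` and
`n ↦ (N + 1) φⁿ` solve the recurrence of `t`, and since its coefficients are nonnegative,
solutions compare termwise once they compare at `n = 0, 1`. This pins `t n` between `φⁿ` and
`(N + 1) φⁿ`, and the `n`-th root of a positive constant tends to `1`.
-/

open Filter Topology

lemma le_of_linearRec_of_nonneg {a b : ℝ} (ha : 0 ≤ a) (hb : 0 ≤ b) {x y : ℕ → ℝ}
    (hx : ∀ n, x (n + 2) = a * x (n + 1) + b * x n)
    (hy : ∀ n, y (n + 2) = a * y (n + 1) + b * y n)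
    (h0 : x 0 ≤ y 0) (h1 : x 1 ≤ y 1) (n : ℕ) : x n ≤ y n := by
  suffices ∀ n, x n ≤ y n ∧ x (n + 1) ≤ y (n + 1) from (this n).1
  intro n
  induction n with
  | zero => exact ⟨h0, h1⟩
  | succ k ih =>
    refine ⟨ih.2, ?_⟩
    rw [hx, hy]
    gcongr
    exacts [ih.2, ih.1]

lemma const_mul_pow_linearRec {a b φ : ℝ} (hφ : φ ^ 2 = a * φ + b) (c : ℝ) (n : ℕ) :
    c * φ ^ (n + 2) = a * (c * φ ^ (n + 1)) + b * (c * φ ^ n) := by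
  linear_combination c * φ ^ n * hφ

section PerronRoot

variable {a : ℝ}

lemma add_sqrt_div_two_sq (a : ℝ) :
    ((a + √(a ^ 2 + 4)) / 2) ^ 2 = a * ((a + √(a ^ 2 + 4)) / 2) + 1 := by
  linear_combination (1 / 4 : ℝ) * Real.sq_sqrt (by positivity : (0 : ℝ) ≤ a ^ 2 + 4)

lemma two_le_sqrt_sq_add_four (a : ℝ) : 2 ≤ √(a ^ 2 + 4) :=
  Real.le_sqrt_of_sq_le (by nlinarith)

lemma one_le_add_sqrt_div_two (ha : 0 ≤ a) : 1 ≤ (a + √(a ^ 2 + 4)) / 2 := by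
  linarith [two_le_sqrt_sq_add_four a]

lemma add_sqrt_div_two_le (ha : 0 ≤ a) : (a + √(a ^ 2 + 4)) / 2 ≤ a + 1 := by
  have : √(a ^ 2 + 4) ≤ a + 2 := Real.sqrt_le_iff.2 ⟨by linarith, by nlinarith⟩
  linarith

end PerronRoot

lemma tendsto_const_rpow_one_div_natCast {c : ℝ} (hc : 0 < c) :
    Tendsto (fun n : ℕ => c ^ (1 / (n : ℝ))) atTop (𝓝 1) := by
  simpa [Function.comp_def] using ((Real.continuousAt_const_rpow hc.ne').tendsto).comp
    tendsto_one_div_atTop_nhds_zero_nat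

lemma mul_pow_rpow_one_div {c φ : ℝ} (hc : 0 ≤ c) (hφ : 0 ≤ φ) {n : ℕ} (hn : n ≠ 0) :
    (c * φ ^ n) ^ (1 / (n : ℝ)) = c ^ (1 / (n : ℝ)) * φ := by
  rw [Real.mul_rpow hc (by positivity), one_div, Real.pow_rpow_inv_natCast hφ hn]

lemma tendsto_rpow_one_div_of_le_of_le {u : ℕ → ℝ} {c C φ : ℝ} (hc : 0 < c) (hC : 0 < C)
    (hφ : 0 ≤ φ) (hlow : ∀ n, c * φ ^ n ≤ u n) (hup : ∀ n, u n ≤ C * φ ^ n) :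
    Tendsto (fun n : ℕ => u n ^ (1 / (n : ℝ))) atTop (𝓝 φ) := by
  have hlim : ∀ {d : ℝ}, 0 < d → Tendsto (fun n : ℕ => d ^ (1 / (n : ℝ)) * φ) atTop (𝓝 φ) :=
    fun hd => by simpa using (tendsto_const_rpow_one_div_natCast hd).mul_const φ
  refine tendsto_of_tendsto_of_tendsto_of_le_of_le' (hlim hc) (hlim hC) ?_ ?_ <;>
    filter_upwards [eventually_ne_atTop 0] with n hn
  · rw [← mul_pow_rpow_one_div hc.le hφ hn]
    exact Real.rpow_le_rpow (by positivity) (hlow n) (by positivity)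
  · rw [← mul_pow_rpow_one_div hC.le hφ hn]
    exact Real.rpow_le_rpow ((by positivity : 0 ≤ c * φ ^ n).trans (hlow n)) (hup n)
      (by positivity)

theorem stmt_6_general
    (N : ℕ) (t : ℕ → ℕ)
    (h0 : t 0 = 1) (h1 : t 1 = N + 1)
    (hrec : ∀ n, t (n + 2) = N * t (n + 1) + t n) :
    Tendsto (fun n : ℕ => (t n : ℝ) ^ (1 / (n : ℝ))) atTop
      (nhds (((N : ℝ) + Real.sqrt ((N : ℝ) ^ 2 + 4)) / 2)) := by
  set φ : ℝ := ((N : ℝ) + √((N : ℝ) ^ 2 + 4)) / 2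
  have hN : (0 : ℝ) ≤ N := N.cast_nonneg
  have hφ1 : 1 ≤ φ := one_le_add_sqrt_div_two hN
  have hφN : φ ≤ N + 1 := add_sqrt_div_two_le hN
  have hgeom := const_mul_pow_linearRec (add_sqrt_div_two_sq (N : ℝ))
  have ht : ∀ n, (t (n + 2) : ℝ) = N * t (n + 1) + 1 * t n := fun n => by
    rw [one_mul]; exact_mod_cast hrec n
  refine tendsto_rpow_one_div_of_le_of_le one_pos (by positivity : (0 : ℝ) < N + 1)
    (by positivity) (le_of_linearRec_of_nonneg hN zero_le_one (hgeom 1) ht ?_ ?_)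
    (le_of_linearRec_of_nonneg hN zero_le_one ht (hgeom (N + 1)) ?_ ?_)
  all_goals simp only [h0, h1, pow_zero, pow_one, Nat.cast_one, Nat.cast_add]
  · norm_num
  · linarith
  · linarith
  · nlinarith

/-- Exponential growth rate of the ISI-free string count with `N` molecule
types: `t_N(n)^(1/n) → (N + √(N² + 4)) / 2`. -/
theorem stmt_6
    (N : ℕ) (hN : 1 ≤ N) (t : ℕ → ℕ)
    (h0 : t 0 = 1) (h1 : t 1 = N + 1)
    (hrec : ∀ n, t (n + 2) = N * t (n + 1) + t n) :
    Tendsto (fun n : ℕ => (t n : ℝ) ^ (1 / (n : ℝ))) atTop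
      (nhds (((N : ℝ) + Real.sqrt ((N : ℝ) ^ 2 + 4)) / 2)) :=
  stmt_6_general N t h0 h1 hrec
end
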